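/- Let v be a smooth plurisubharmonic function on a neighborhood V of the origin in C^n with v(0) = 0, let m_1, …, m_n be positive integers with m = max{m_i : 1 ≤ i ≤ n}, and let u(z) = v(z) + Σ_{i=1}^n |z_i|^{2m_i}. Then there exist a neighborhood U of 0 with compact closure contained in V and a constant C > 0 such that for every sufficiently small δ > 0 there is a smooth function ρ_δ : U → R with 0 ≤ ρ_δ ≤ 1 on U and H_{u/δ + ρ_δ}(z; s) ≥ C·δ^{-1/m}·|s|² for all z ∈ U and all s ∈ C^n. -/

import Mathlib

open scoped BigOperators

noncomputable section

abbrev Cn (n : ℕ) := EuclideanSpace ℂ (Fin n)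

/-- Complex Hessian (Levi form) of a real-valued function on a complex normed space:
`H_f(z; s) = (1/4)(D²f(z)[s,s] + D²f(z)[I•s, I•s]) = Σ_{i,j} f_{z_i z̄_j}(z) s_i s̄_j`. -/
noncomputable def levi {E : Type*} [NormedAddCommGroup E] [NormedSpace ℂ E]
    (f : E → ℝ) (z s : E) : ℝ :=
  (1 / 4) * (iteratedFDeriv ℝ 2 f z ![s, s]
    + iteratedFDeriv ℝ 2 f z ![Complex.I • s, Complex.I • s])

/-- Plurisubharmonic on a set: smooth there with positive semidefinite complex Hessian. -/
def PSHOn {E : Type*} [NormedAddCommGroup E] [NormedSpace ℂ E]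
    (f : E → ℝ) (V : Set E) : Prop :=
  ContDiffOn ℝ (⊤ : ℕ∞) f V ∧ ∀ z ∈ V, ∀ s : E, 0 ≤ levi f z s

/-- Projection `C^{n+1} → C^n` onto the first `n` coordinates. -/
def proj (n : ℕ) (w : Cn (n + 1)) : Cn n := WithLp.toLp 2 (fun i : Fin n => w i.castSucc)

/-- Defining function `r(z, z_{n+1}) = 2 Re z_{n+1} + u(z)` of the rigid domain. -/
def rfun (n : ℕ) (u : Cn n → ℝ) (w : Cn (n + 1)) : ℝ :=
  2 * (w (Fin.last n)).re + u (proj n w)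

/-- bilinear derivative of normSq: Nbil z w = 2*(z.re*w.re + z.im*w.im) -/
def Nbil : ℂ →L[ℝ] ℂ →L[ℝ] ℝ :=
  (2 : ℝ) • (Complex.reCLM.smulRight Complex.reCLM + Complex.imCLM.smulRight Complex.imCLM)

@[simp] lemma Nbil_apply (z w : ℂ) : Nbil z w = 2 * (z.re * w.re + z.im * w.im) := by
  simp [Nbil]
  ring

lemma hasFDerivAt_normSq (z : ℂ) :
    HasFDerivAt (fun t : ℂ => Complex.normSq t) (Nbil z) z := by
  have h : HasFDerivAt (fun t : ℂ => t.re * t.re + t.im * t.im)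
      ((z.re • Complex.reCLM + z.re • Complex.reCLM) +
       (z.im • Complex.imCLM + z.im • Complex.imCLM)) z := by
    exact (((Complex.reCLM.hasFDerivAt (x := z)).mul (Complex.reCLM.hasFDerivAt (x := z))).add
      ((Complex.imCLM.hasFDerivAt (x := z)).mul (Complex.imCLM.hasFDerivAt (x := z))))
  have h2 : (fun t : ℂ => Complex.normSq t) = fun t : ℂ => t.re * t.re + t.im * t.im := by
    funext t; simp [Complex.normSq_apply]
  rw [h2]
  convert h using 1
  ext w
  simp
  ring

lemma fderiv_comp_normSq (g : ℝ → ℝ) (hg : ContDiff ℝ (⊤ : ℕ∞) g) :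
    (fderiv ℝ (fun t : ℂ => g (Complex.normSq t))) =
      fun z => deriv g (Complex.normSq z) • Nbil z := by
  funext z
  have hgd : HasDerivAt g (deriv g (Complex.normSq z)) (Complex.normSq z) :=
    ((hg.differentiable (by simp)) _).hasDerivAt
  exact (hgd.comp_hasFDerivAt z (hasFDerivAt_normSq z)).fderiv

lemma iteratedFDeriv_two_comp_normSq (g : ℝ → ℝ) (hg : ContDiff ℝ (⊤ : ℕ∞) g) (z : ℂ) (s t : ℂ) :
    iteratedFDeriv ℝ 2 (fun w : ℂ => g (Complex.normSq w)) z ![s, t] =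
      deriv (deriv g) (Complex.normSq z) * (Nbil z s) * (Nbil z t)
        + deriv g (Complex.normSq z) * (Nbil s t) := by
  rw [iteratedFDeriv_two_apply, fderiv_comp_normSq g hg]
  have hc : HasFDerivAt (fun w : ℂ => deriv g (Complex.normSq w))
      ((deriv (deriv g) (Complex.normSq z)) • Nbil z) z := by
    have : HasDerivAt (deriv g) (deriv (deriv g) (Complex.normSq z)) (Complex.normSq z) :=
      ((((contDiff_infty_iff_deriv.mp (hg.of_le (by simp))).2.differentiable (by simp))) _).hasDerivAt
    exact this.comp_hasFDerivAt z (hasFDerivAt_normSq z)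
  have hN : HasFDerivAt (fun w : ℂ => Nbil w) Nbil z := Nbil.hasFDerivAt
  have h : HasFDerivAt (fun w : ℂ => deriv g (Complex.normSq w) • Nbil w) _ z := hc.smul hN
  rw [h.fderiv]
  simp [ContinuousLinearMap.smul_apply, ContinuousLinearMap.add_apply]
  ring

lemma levi_comp_normSq (g : ℝ → ℝ) (hg : ContDiff ℝ (⊤ : ℕ∞) g) (z s : ℂ) :
    levi (fun w : ℂ => g (Complex.normSq w)) z s =
      (Complex.normSq z * deriv (deriv g) (Complex.normSq z)
        + deriv g (Complex.normSq z)) * Complex.normSq s := by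
  unfold levi
  rw [iteratedFDeriv_two_comp_normSq g hg, iteratedFDeriv_two_comp_normSq g hg]
  simp only [Nbil_apply, smul_eq_mul, Complex.mul_re, Complex.mul_im, Complex.I_re, Complex.I_im,
    Complex.normSq_apply]
  ring

lemma levi_coord {n : ℕ} (f : ℂ → ℝ) (hf : ContDiff ℝ 2 f) (i : Fin n) (z s : Cn n) :
    levi (fun w : Cn n => f (w i)) z s = levi f (z i) (s i) := by
  set L : Cn n →L[ℝ] ℂ := (EuclideanSpace.proj i : EuclideanSpace ℂ (Fin n) →L[ℂ] ℂ).restrictScalars ℝ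
  have hL : ∀ w : Cn n, L w = w i := fun w => rfl
  have hfc : (fun w : Cn n => f (w i)) = f ∘ L := by funext w; simp [hL]
  have key : ∀ a : ℂ, iteratedFDeriv ℝ 2 (f ∘ L) z ![a • s, a • s] =
      iteratedFDeriv ℝ 2 f (z i) ![a • s i, a • s i] := by
    intro a
    rw [L.iteratedFDeriv_comp_right hf z le_rfl]
    rw [ContinuousMultilinearMap.compContinuousLinearMap_apply]
    congr 1
    funext j
    fin_cases j <;> simp [hL]
  have key1 : iteratedFDeriv ℝ 2 (f ∘ L) z ![s, s] =
      iteratedFDeriv ℝ 2 f (z i) ![s i, s i] := by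
    have := key 1
    simpa using this
  unfold levi
  rw [hfc, key1, key Complex.I]

section add
variable {E : Type*} [NormedAddCommGroup E] [NormedSpace ℂ E]

lemma levi_add {f g : E → ℝ} (hf : ContDiff ℝ 2 f) (hg : ContDiff ℝ 2 g) (z s : E) :
    levi (fun x => f x + g x) z s = levi f z s + levi g z s := by
  unfold levi
  rw [iteratedFDeriv_add_apply' hf.contDiffAt hg.contDiffAt]
  simp only [ContinuousMultilinearMap.add_apply]
  ring

lemma levi_zero (z s : E) : levi (fun _ : E => (0:ℝ)) z s = 0 := by
  unfold levi
  rw [iteratedFDeriv_zero_fun]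
  simp

lemma levi_sum {ι : Type*} [DecidableEq ι] (t : Finset ι) (f : ι → E → ℝ)
    (hf : ∀ i ∈ t, ContDiff ℝ 2 (f i)) (z s : E) :
    levi (fun x => ∑ i ∈ t, f i x) z s = ∑ i ∈ t, levi (f i) z s := by
  induction t using Finset.induction_on with
  | empty => simpa using levi_zero z s
  | @insert j t hj ih =>
    rw [Finset.sum_insert hj]
    have h1 : levi (fun x => f j x + ∑ i ∈ t, f i x) z s
        = levi (f j) z s + levi (fun x => ∑ i ∈ t, f i x) z s := by
      apply levi_add (hf j (Finset.mem_insert_self j t))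
        (ContDiff.sum fun i hi => hf i (Finset.mem_insert_of_mem hi))
    have h2 : (fun x => ∑ i ∈ insert j t, f i x) = fun x => f j x + ∑ i ∈ t, f i x := by
      funext x; rw [Finset.sum_insert hj]
    rw [h2, h1, ih fun i hi => hf i (Finset.mem_insert_of_mem hi)]

end add

lemma contDiff_normSq : ContDiff ℝ (⊤ : ℕ∞) (fun t : ℂ => Complex.normSq t) := by
  have : (fun t : ℂ => Complex.normSq t) = fun t : ℂ => t.re * t.re + t.im * t.im := by
    funext t; simp [Complex.normSq_apply]
  rw [this]
  exact (Complex.reCLM.contDiff.mul Complex.reCLM.contDiff).add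
    (Complex.imCLM.contDiff.mul Complex.imCLM.contDiff)

def gfun (δ a c : ℝ) (k : ℕ) : ℝ → ℝ := fun x => δ⁻¹ * x ^ k + c * (1 - Real.exp (-(a * x)))

def gfun' (δ a c : ℝ) (k : ℕ) : ℝ → ℝ :=
  fun x => δ⁻¹ * (k * x ^ (k - 1)) + c * (a * Real.exp (-(a * x)))

def gfun'' (δ a c : ℝ) (k : ℕ) : ℝ → ℝ :=
  fun x => δ⁻¹ * (k * ((k - 1 : ℕ) * x ^ (k - 1 - 1))) - c * (a * a * Real.exp (-(a * x)))

lemma contDiff_gfun (δ a c : ℝ) (k : ℕ) : ContDiff ℝ (⊤ : ℕ∞) (gfun δ a c k) := by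
  exact (contDiff_const.mul (contDiff_id.pow k)).add (contDiff_const.mul (contDiff_const.sub
    (Real.contDiff_exp.comp ((contDiff_const.mul contDiff_id).neg))))

lemma hasDerivAt_exp_part (a x : ℝ) :
    HasDerivAt (fun x : ℝ => Real.exp (-(a * x))) (Real.exp (-(a * x)) * (-a)) x := by
  have h1 : HasDerivAt (fun x : ℝ => -(a * x)) (-a) x := by
    exact (((hasDerivAt_id x).const_mul a).neg).congr_deriv (by simp)
  exact h1.exp

lemma hasDerivAt_gfun (δ a c : ℝ) (k : ℕ) (x : ℝ) :
    HasDerivAt (gfun δ a c k) (gfun' δ a c k x) x := by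
  have h1 : HasDerivAt (fun x : ℝ => δ⁻¹ * x ^ k) (δ⁻¹ * (k * x ^ (k - 1))) x :=
    (hasDerivAt_pow k x).const_mul δ⁻¹
  have h2 : HasDerivAt (fun x : ℝ => c * (1 - Real.exp (-(a * x))))
      (c * (a * Real.exp (-(a * x)))) x := by
    have := ((hasDerivAt_exp_part a x).const_sub 1).const_mul c
    exact this.congr_deriv (by ring)
  exact h1.add h2

lemma hasDerivAt_gfun' (δ a c : ℝ) (k : ℕ) (x : ℝ) :
    HasDerivAt (gfun' δ a c k) (gfun'' δ a c k x) x := by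
  have h1 : HasDerivAt (fun x : ℝ => δ⁻¹ * ((k : ℝ) * x ^ (k - 1)))
      (δ⁻¹ * ((k : ℝ) * ((k - 1 : ℕ) * x ^ (k - 1 - 1)))) x := by
    have h := ((hasDerivAt_pow (k - 1) x).const_mul (k : ℝ)).const_mul δ⁻¹
    convert h using 1
  have h2 : HasDerivAt (fun x : ℝ => c * (a * Real.exp (-(a * x))))
      (-(c * (a * a * Real.exp (-(a * x))))) x := by
    have := ((hasDerivAt_exp_part a x).const_mul a).const_mul c
    exact this.congr_deriv (by ring)
  have h := h1.add h2
  exact h.congr_deriv (by unfold gfun''; ring)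

lemma deriv_gfun (δ a c : ℝ) (k : ℕ) : deriv (gfun δ a c k) = gfun' δ a c k := by
  funext x; exact (hasDerivAt_gfun δ a c k x).deriv

lemma deriv_gfun' (δ a c : ℝ) (k : ℕ) : deriv (gfun' δ a c k) = gfun'' δ a c k := by
  funext x; exact (hasDerivAt_gfun' δ a c k x).deriv

lemma levi_gfun_normSq (δ a c : ℝ) (k : ℕ) (z s : ℂ) :
    levi (fun w : ℂ => gfun δ a c k (Complex.normSq w)) z s =
      (Complex.normSq z * gfun'' δ a c k (Complex.normSq z)
        + gfun' δ a c k (Complex.normSq z)) * Complex.normSq s := by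
  rw [levi_comp_normSq (gfun δ a c k) (contDiff_gfun δ a c k) z s, deriv_gfun, deriv_gfun']

lemma exp_term_lower (y : ℝ) (hy : 0 ≤ y) : -1 ≤ Real.exp (-y) * (1 - y) := by
  have h1 := Real.add_one_le_exp y
  have h2 : Real.exp (-y) * Real.exp y = 1 := by
    rw [← Real.exp_add]; simp
  have h3 := Real.exp_pos (-y)
  nlinarith

set_option maxHeartbeats 1000000 in
lemma key_bound (n k m : ℕ) (hn : 1 ≤ n) (hk : 1 ≤ k) (hkm : k ≤ m) (δ : ℝ)
    (hδ : 0 < δ) (hδ1 : δ ≤ 1) (x : ℝ) (hx : 0 ≤ x)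
    (a : ℝ) (ha : a = δ ^ (-(1/(k:ℝ))) / 2) :
    (1/(16*n)) * δ ^ (-(1/(m:ℝ))) ≤
      x * gfun'' δ a (n:ℝ)⁻¹ k x + gfun' δ a (n:ℝ)⁻¹ k x := by
  have hk0 : (0:ℝ) < k := by exact_mod_cast hk
  have hm' : 1 ≤ m := le_trans hk hkm
  have hm0 : (0:ℝ) < m := by exact_mod_cast hm'
  have hn0 : (0:ℝ) < n := by exact_mod_cast hn
  have hn1 : (1:ℝ) ≤ n := by exact_mod_cast hn
  have hδk : (0:ℝ) < δ ^ (-(1/(k:ℝ))) := Real.rpow_pos_of_pos hδ _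
  have hδm : (0:ℝ) < δ ^ (-(1/(m:ℝ))) := Real.rpow_pos_of_pos hδ _
  have ha0 : 0 < a := by rw [ha]; positivity
  have hni : (0:ℝ) < (n:ℝ)⁻¹ := by positivity
  have hni1 : (n:ℝ)⁻¹ ≤ 1 := by
    rw [inv_le_one_iff₀]; right; exact hn1
  have hdm : δ ^ (-(1/(m:ℝ))) ≤ δ ^ (-(1/(k:ℝ))) := by
    apply Real.rpow_le_rpow_of_exponent_ge hδ hδ1
    have : 1/(m:ℝ) ≤ 1/(k:ℝ) := by
      apply one_div_le_one_div_of_le hk0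
      exact_mod_cast hkm
    linarith
  have hE : 0 < Real.exp (-(a*x)) := Real.exp_pos _
  have hsplit : x * gfun'' δ a (n:ℝ)⁻¹ k x + gfun' δ a (n:ℝ)⁻¹ k x =
      (δ⁻¹ * ((k:ℝ) * (((k-1:ℕ):ℝ) * x ^ (k-1-1))) * x)
      + δ⁻¹ * ((k:ℝ) * x ^ (k-1))
      + (n:ℝ)⁻¹ * a * (Real.exp (-(a*x)) * (1 - a*x)) := by
    unfold gfun' gfun''
    ring
  rw [hsplit]
  have hterm0 : 0 ≤ δ⁻¹ * ((k:ℝ) * (((k-1:ℕ):ℝ) * x ^ (k-1-1))) * x := by positivity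
  by_cases hcase : a * x ≤ 1/2
  · -- small x: exponential term dominates
    have he0 : Real.exp ((1:ℝ)/2) < 3 :=
      lt_trans (lt_of_le_of_lt (Real.exp_le_exp.mpr (by norm_num)) Real.exp_one_lt_d9)
        (by norm_num)
    have he1 : (1:ℝ)/3 ≤ Real.exp (-(a*x)) := by
      have h1 : Real.exp (-(a*x)) = (Real.exp (a*x))⁻¹ := by
        rw [← Real.exp_neg]
      rw [h1]
      have h2 : Real.exp (a*x) ≤ Real.exp ((1:ℝ)/2) := Real.exp_le_exp.mpr hcase
      have h3 : Real.exp (a*x) < 3 := lt_of_le_of_lt h2 he0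
      rw [one_div]
      exact le_of_lt (inv_strictAnti₀ (Real.exp_pos _) h3)
    have he2 : (1:ℝ)/2 ≤ 1 - a*x := by linarith
    have hterm1 : 0 ≤ δ⁻¹ * ((k:ℝ) * x ^ (k-1)) := by positivity
    have h3 : (n:ℝ)⁻¹ * a * (1/6) ≤ (n:ℝ)⁻¹ * a * (Real.exp (-(a*x)) * (1 - a*x)) := by
      apply mul_le_mul_of_nonneg_left _ (by positivity)
      nlinarith
    have h4 : (1/(16*(n:ℝ))) * δ ^ (-(1/(m:ℝ))) ≤ (n:ℝ)⁻¹ * a * (1/6) := by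
      rw [ha]
      have h5 : (1/(16*(n:ℝ))) = (n:ℝ)⁻¹ * (1/16) := by
        field_simp
      rw [h5]
      linarith [mul_le_mul_of_nonneg_left hdm (le_of_lt hni),
        mul_pos hni hδm, mul_pos hni hδk]
    linarith
  · -- large x: polynomial term dominates
    push_neg at hcase
    have hprod : δ ^ ((1:ℝ)/k) * δ ^ (-(1/(k:ℝ))) = 1 := by
      rw [← Real.rpow_add hδ]
      simp
    have hδk1 : (0:ℝ) < δ ^ ((1:ℝ)/k) := Real.rpow_pos_of_pos hδ _
    have hxl : δ ^ ((1:ℝ)/k) ≤ x := by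
      have h1 : 1 < δ ^ (-(1/(k:ℝ))) * x := by
        rw [ha] at hcase
        nlinarith
      nlinarith
    have hpow : δ ^ (((1:ℝ)/k) * ((k-1:ℕ):ℝ)) ≤ x ^ (k-1) := by
      have h1 : (δ ^ ((1:ℝ)/k)) ^ (k-1) ≤ x ^ (k-1) :=
        pow_le_pow_left₀ (le_of_lt hδk1) hxl (k-1)
      have hcast : δ ^ (((1:ℝ)/k) * ((k-1:ℕ):ℝ)) = (δ ^ ((1:ℝ)/k)) ^ (k-1) := by
        rw [Real.rpow_mul (le_of_lt hδ), Real.rpow_natCast]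
      rw [hcast]
      exact h1
    have hpoly : δ ^ (-(1/(k:ℝ))) ≤ δ⁻¹ * ((k:ℝ) * x ^ (k-1)) := by
      have h1 : δ⁻¹ * δ ^ (((1:ℝ)/k) * ((k-1:ℕ):ℝ)) = δ ^ (-(1/(k:ℝ))) := by
        rw [← Real.rpow_neg_one δ, ← Real.rpow_add hδ]
        congr 1
        have hck : ((k-1:ℕ):ℝ) = (k:ℝ) - 1 := by
          rw [Nat.cast_sub hk]; norm_num
        rw [hck]
        field_simp
        ring
      calc δ ^ (-(1/(k:ℝ))) = δ⁻¹ * δ ^ (((1:ℝ)/k) * ((k-1:ℕ):ℝ)) := h1.symm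
        _ ≤ δ⁻¹ * x ^ (k-1) := by gcongr
        _ ≤ δ⁻¹ * ((k:ℝ) * x ^ (k-1)) := by
            have h0 : (0:ℝ) ≤ x ^ (k-1) := pow_nonneg hx _
            have h0' : (0:ℝ) ≤ δ⁻¹ := by positivity
            have h2 : x ^ (k-1) ≤ (k:ℝ) * x ^ (k-1) :=
              le_mul_of_one_le_left h0 (by exact_mod_cast hk)
            exact mul_le_mul_of_nonneg_left h2 h0'
    have hexp : -((n:ℝ)⁻¹ * a) ≤ (n:ℝ)⁻¹ * a * (Real.exp (-(a*x)) * (1 - a*x)) := by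
      have h1 := exp_term_lower (a*x) (by positivity)
      have hpa : (0:ℝ) ≤ (n:ℝ)⁻¹ * a := by positivity
      have h2 : (n:ℝ)⁻¹ * a * (-1) ≤ (n:ℝ)⁻¹ * a * (Real.exp (-(a*x)) * (1 - a*x)) :=
        mul_le_mul_of_nonneg_left h1 hpa
      linarith
    have hfin : (1/(16*(n:ℝ))) * δ ^ (-(1/(m:ℝ))) ≤ δ ^ (-(1/(k:ℝ))) - (n:ℝ)⁻¹ * a := by
      rw [ha]
      have h5 : (1/(16*(n:ℝ))) = (n:ℝ)⁻¹ * (1/16) := by field_simp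
      rw [h5]
      linarith [mul_le_mul_of_nonneg_left hdm (le_of_lt hni),
        mul_le_mul_of_nonneg_right hni1 (le_of_lt hδk),
        mul_pos hni hδm, mul_pos hni hδk]
    linarith

/-- Corollary 3.2, resolver form: for `u = v + Σ |z_i|^{2m_i}` with `v`
plurisubharmonic, the hypothesis of the Main Lemma holds with `ε = 1/(2m)`, `m = max m_i`. -/
theorem resolver_psh_plus_diagonal (n : ℕ) (mi : Fin n → ℕ) (hmi : ∀ i, 1 ≤ mi i)
    (m : ℕ) (hm : ∀ i, mi i ≤ m) (hm' : ∃ i, mi i = m)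
    (V : Set (Cn n)) (hV : IsOpen V) (h0V : (0 : Cn n) ∈ V)
    (v : Cn n → ℝ) (hv : PSHOn v V) (hv0 : v 0 = 0)
    (u : Cn n → ℝ) (hu : ∀ z, u z = v z + ∑ i, ‖z i‖ ^ (2 * mi i)) :
    ∃ U : Set (Cn n), IsOpen U ∧ (0 : Cn n) ∈ U ∧ closure U ⊆ V ∧ IsCompact (closure U) ∧
      ∃ C > (0 : ℝ), ∃ δ₀ > (0 : ℝ), ∀ δ : ℝ, 0 < δ → δ < δ₀ →
        ∃ ρ : Cn n → ℝ, ContDiffOn ℝ (⊤ : ℕ∞) ρ U ∧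
          (∀ z ∈ U, 0 ≤ ρ z ∧ ρ z ≤ 1) ∧
          (∀ z ∈ U, ∀ s : Cn n,
            C * δ ^ (-(1 / (m : ℝ))) * ‖s‖ ^ 2 ≤ levi (fun w => u w / δ + ρ w) z s) := by
  classical
  obtain ⟨i₀, hi₀⟩ := hm'
  have hn : 1 ≤ n := i₀.pos
  have hn0 : (0:ℝ) < n := by exact_mod_cast hn
  have hm1 : 1 ≤ m := hi₀ ▸ hmi i₀
  -- choose the neighborhood U
  obtain ⟨ε, hε0, hεV⟩ := Metric.isOpen_iff.mp hV 0 h0V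
  set r : ℝ := ε/2 with hr
  have hr0 : 0 < r := by positivity
  have hrV : Metric.closedBall (0 : Cn n) r ⊆ V :=
    (Metric.closedBall_subset_ball (by simp [hr]; linarith)).trans hεV
  refine ⟨Metric.ball 0 r, Metric.isOpen_ball, Metric.mem_ball_self hr0, ?_, ?_, ?_⟩
  · rw [closure_ball (0 : Cn n) (ne_of_gt hr0)]
    exact hrV
  · rw [closure_ball (0 : Cn n) (ne_of_gt hr0)]
    exact isCompact_closedBall _ _
  refine ⟨1/(16*n), by positivity, 1, one_pos, ?_⟩
  intro δ hδ hδ1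
  set c : ℝ := (n:ℝ)⁻¹ with hc
  set a : Fin n → ℝ := fun i => δ ^ (-(1/(mi i : ℝ))) / 2 with ha
  set ρ : Cn n → ℝ :=
    fun z => ∑ i, c * (1 - Real.exp (-(a i * Complex.normSq (z i)))) with hρ
  have hρsmooth : ContDiff ℝ (⊤ : ℕ∞) ρ := by
    apply ContDiff.sum
    intro i _
    have hproj : ContDiff ℝ (⊤ : ℕ∞) (fun z : Cn n => (z i : ℂ)) :=
      ((EuclideanSpace.proj i : EuclideanSpace ℂ (Fin n) →L[ℂ] ℂ).restrictScalars ℝ).contDiff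
    exact contDiff_const.mul (contDiff_const.sub (Real.contDiff_exp.comp
      ((contDiff_const.mul (contDiff_normSq.comp hproj)).neg)))
  -- the per-coordinate model functions
  set hfun : Fin n → Cn n → ℝ :=
    fun i z => gfun δ (a i) c (mi i) (Complex.normSq (z i)) with hhfun
  set H : Cn n → ℝ := fun z => ∑ i, hfun i z with hH
  have hfsmooth : ∀ i : Fin n, ContDiff ℝ 2 (hfun i) := by
    intro i
    have hproj : ContDiff ℝ (⊤ : ℕ∞) (fun z : Cn n => (z i : ℂ)) :=
      ((EuclideanSpace.proj i : EuclideanSpace ℂ (Fin n) →L[ℂ] ℂ).restrictScalars ℝ).contDiff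
    exact (((contDiff_gfun δ (a i) c (mi i)).comp contDiff_normSq).comp hproj).of_le (WithTop.coe_le_coe.mpr le_top)
  have hHsmooth : ContDiff ℝ 2 H := ContDiff.sum fun i _ => hfsmooth i
  refine ⟨ρ, hρsmooth.contDiffOn, ?_, ?_⟩
  · -- bounds on ρ
    intro z _
    have hterm : ∀ i : Fin n, 0 ≤ c * (1 - Real.exp (-(a i * Complex.normSq (z i)))) ∧
        c * (1 - Real.exp (-(a i * Complex.normSq (z i)))) ≤ c := by
      intro i
      have hai : 0 < a i := by
        have : (0:ℝ) < δ ^ (-(1/(mi i : ℝ))) := Real.rpow_pos_of_pos hδ _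
        simp only [ha]
        positivity
      have hx : 0 ≤ Complex.normSq (z i) := Complex.normSq_nonneg _
      have h1 : Real.exp (-(a i * Complex.normSq (z i))) ≤ 1 := by
        rw [Real.exp_le_one_iff]
        nlinarith
      have h2 : 0 < Real.exp (-(a i * Complex.normSq (z i))) := Real.exp_pos _
      have hc0 : 0 ≤ c := by positivity
      constructor
      · apply mul_nonneg hc0; linarith
      · nlinarith
    constructor
    · rw [hρ]
      exact Finset.sum_nonneg fun i _ => (hterm i).1
    · rw [hρ]
      calc ∑ i, c * (1 - Real.exp (-(a i * Complex.normSq (z i)))) ≤ ∑ _i : Fin n, c :=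
            Finset.sum_le_sum fun i _ => (hterm i).2
        _ = 1 := by
            rw [Finset.sum_const, Finset.card_univ, Fintype.card_fin, hc]
            rw [nsmul_eq_mul]
            field_simp
  · -- the Levi form estimate
    intro z hzU s
    have hzV : z ∈ V := hrV (Metric.ball_subset_closedBall hzU)
    -- rewrite the function
    have hFeq : (fun w => u w / δ + ρ w) = fun w => δ⁻¹ * v w + H w := by
      funext w
      rw [hu w, hH]
      simp only [hhfun]
      unfold gfun
      rw [Finset.sum_add_distrib]
      have habs : ∀ i : Fin n, ‖w i‖ ^ (2 * mi i)
          = Complex.normSq (w i) ^ (mi i) := by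
        intro i
        rw [pow_mul, Complex.sq_norm]
      simp_rw [habs]
      rw [add_div, Finset.sum_div, hρ]
      simp_rw [div_eq_inv_mul]
      ring
    rw [hFeq]
    -- split the Levi form
    have hvs2 : ContDiffOn ℝ 2 (fun w => δ⁻¹ * v w) V := by
      have := (hv.1.const_smul δ⁻¹).of_le (WithTop.coe_le_coe.mpr le_top : (2 : WithTop ℕ∞) ≤ ((⊤ : ℕ∞) : WithTop ℕ∞))
      simpa [smul_eq_mul] using this
    have hkey : ∀ mv : Fin 2 → Cn n,
        iteratedFDeriv ℝ 2 (fun w => δ⁻¹ * v w + H w) z mv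
          = δ⁻¹ * iteratedFDeriv ℝ 2 v z mv + iteratedFDeriv ℝ 2 H z mv := by
      intro mv
      have e1 : iteratedFDeriv ℝ 2 (fun w => δ⁻¹ * v w + H w) z
          = iteratedFDerivWithin ℝ 2 (fun w => δ⁻¹ * v w + H w) V z :=
        (iteratedFDerivWithin_of_isOpen 2 hV hzV).symm
      have e2 : iteratedFDerivWithin ℝ 2 (fun w => δ⁻¹ * v w + H w) V z
          = iteratedFDerivWithin ℝ 2 (fun w => δ⁻¹ * v w) V z
            + iteratedFDerivWithin ℝ 2 H V z :=
        iteratedFDerivWithin_add_apply' (hvs2 z hzV) (hHsmooth.contDiffOn z hzV) hV.uniqueDiffOn hzV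
      have e3 : iteratedFDerivWithin ℝ 2 (fun w => δ⁻¹ * v w) V z
          = δ⁻¹ • iteratedFDerivWithin ℝ 2 v V z := by
        have := iteratedFDerivWithin_const_smul_apply (a := δ⁻¹)
          (hv.1.of_le (WithTop.coe_le_coe.mpr le_top : (2 : WithTop ℕ∞) ≤ ((⊤ : ℕ∞) : WithTop ℕ∞)) z hzV) hV.uniqueDiffOn hzV
        rw [← this]
        congr 1
      have e4 : iteratedFDerivWithin ℝ 2 v V z = iteratedFDeriv ℝ 2 v z :=
        iteratedFDerivWithin_of_isOpen 2 hV hzV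
      have e5 : iteratedFDerivWithin ℝ 2 H V z = iteratedFDeriv ℝ 2 H z :=
        iteratedFDerivWithin_of_isOpen 2 hV hzV
      rw [e1, e2, e3, e4, e5]
      simp [smul_eq_mul]
    have hsplit : levi (fun w => δ⁻¹ * v w + H w) z s
        = δ⁻¹ * levi v z s + levi H z s := by
      unfold levi
      rw [hkey, hkey]
      ring
    rw [hsplit]
    -- the v part is nonnegative
    have hv0' : 0 ≤ δ⁻¹ * levi v z s := by
      apply mul_nonneg (by positivity) (hv.2 z hzV s)
    -- the H part
    have hHlevi : levi H z s = ∑ i, (Complex.normSq (z i)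
          * gfun'' δ (a i) c (mi i) (Complex.normSq (z i))
          + gfun' δ (a i) c (mi i) (Complex.normSq (z i))) * Complex.normSq (s i) := by
      rw [hH]
      rw [levi_sum Finset.univ hfun (fun i _ => hfsmooth i) z s]
      apply Finset.sum_congr rfl
      intro i _
      have h1 : levi (hfun i) z s
          = levi (fun t : ℂ => gfun δ (a i) c (mi i) (Complex.normSq t)) (z i) (s i) := by
        apply levi_coord _ (((contDiff_gfun δ (a i) c (mi i)).comp contDiff_normSq).of_le (WithTop.coe_le_coe.mpr le_top))
      rw [h1, levi_gfun_normSq]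
    rw [hHlevi]
    have hbound : ∀ i : Fin n,
        (1/(16*(n:ℝ))) * δ ^ (-(1/(m:ℝ))) * Complex.normSq (s i)
          ≤ (Complex.normSq (z i) * gfun'' δ (a i) c (mi i) (Complex.normSq (z i))
            + gfun' δ (a i) c (mi i) (Complex.normSq (z i))) * Complex.normSq (s i) := by
      intro i
      apply mul_le_mul_of_nonneg_right _ (Complex.normSq_nonneg _)
      exact key_bound n (mi i) m hn (hmi i) (hm i) δ hδ (le_of_lt hδ1)
        (Complex.normSq (z i)) (Complex.normSq_nonneg _) (a i) rfl
    have hnorm : ‖s‖^2 = ∑ i, Complex.normSq (s i) := by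
      rw [EuclideanSpace.norm_eq]
      rw [Real.sq_sqrt (Finset.sum_nonneg fun i _ => sq_nonneg _)]
      apply Finset.sum_congr rfl
      intro i _
      rw [← Complex.sq_norm]
    calc (1/(16*(n:ℝ))) * δ ^ (-(1/(m:ℝ))) * ‖s‖^2
        = ∑ i, (1/(16*(n:ℝ))) * δ ^ (-(1/(m:ℝ))) * Complex.normSq (s i) := by
          rw [hnorm, Finset.mul_sum]
      _ ≤ ∑ i, (Complex.normSq (z i) * gfun'' δ (a i) c (mi i) (Complex.normSq (z i))
            + gfun' δ (a i) c (mi i) (Complex.normSq (z i))) * Complex.normSq (s i) :=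
          Finset.sum_le_sum fun i _ => hbound i
      _ ≤ δ⁻¹ * levi v z s + ∑ i, (Complex.normSq (z i)
            * gfun'' δ (a i) c (mi i) (Complex.normSq (z i))
            + gfun' δ (a i) c (mi i) (Complex.normSq (z i))) * Complex.normSq (s i) := by
          linarith

end
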